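/- Let (X, 𝒜, μ) be a finite measure space, let p ≥ 2 and p' = p/(p−1). Let G : ℝ × S³_d → S³_d be continuous, satisfy the growth condition |G(θ,T)| ≤ C(1+|T|)^{p−1}, and be monotone in its second variable: (G(θ,T₁) − G(θ,T₂)) : (T₁ − T₂) ≥ 0 for all T₁, T₂ ∈ S³_d and θ ∈ ℝ. Let θ_n, θ : X → ℝ be measurable with θ_n → θ μ-almost everywhere; let T_n, T : X → S³_d be measurable with sup_n ∫ |T_n|^p dμ < ∞ and ∫ |T|^p dμ < ∞; and let χ : X → S³_d be measurable with ∫ |χ|^{p'} dμ < ∞. Assume: (i) for every measurable φ : X → S³_d with ∫|φ|^p dμ < ∞, ∫ G(θ_n(x),T_n(x)) : φ(x) dμ → ∫ χ(x) : φ(x) dμ; (ii) for every measurable φ : X → S³_d with ∫|φ|^{p'} dμ < ∞, ∫ T_n(x) : φ(x) dμ → ∫ T(x) : φ(x) dμ; and (iii) limsup_n ∫ G(θ_n(x),T_n(x)) : T_n(x) dμ ≤ ∫ χ(x) : T(x) dμ. Then χ(x) = G(θ(x), T(x)) for μ-almost every x ∈ X. -/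

import Mathlib

open MeasureTheory Filter

noncomputable instance : MeasurableSpace (Matrix (Fin 3) (Fin 3) ℝ) :=
  (inferInstance : MeasurableSpace (Fin 3 → Fin 3 → ℝ))

/-- The Frobenius inner product `A : B = ∑ᵢⱼ aᵢⱼ bᵢⱼ` of `3 × 3` real matrices. -/
noncomputable def frob (A B : Matrix (Fin 3) (Fin 3) ℝ) : ℝ := ∑ i, ∑ j, A i j * B i j

/-- The Frobenius norm `|A|` of a `3 × 3` real matrix. -/
noncomputable def frobNorm (A : Matrix (Fin 3) (Fin 3) ℝ) : ℝ := Real.sqrt (frob A A)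

/-- `A ∈ S³_d` : `A` is a symmetric traceless `3 × 3` real matrix. -/
def IsS3d (A : Matrix (Fin 3) (Fin 3) ℝ) : Prop := A.IsSymm ∧ A.trace = 0

/-!
Minty's trick. Monotonicity gives `0 ≤ ∫ (G(θₙ,Tₙ) - G(θₙ,φ)) : (Tₙ - φ)` for every admissible
test function `φ`. In the expansion, `∫ G(θₙ,Tₙ) : φ` converges by (i); `G(θₙ,φ) → G(θ,φ)` strongly
in `L^{p'}` by dominated convergence (growth bound and `θₙ → θ` a.e.), so paired with the weakly
convergent, `L^p`-bounded `Tₙ` or with `φ` it converges as well; the energy term is controlled by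
(iii). The limit is the Minty inequality `0 ≤ ∫ (χ - G(θ,φ)) : (T - φ)`. With `φ = T - εψ`, dividing
by `ε` and letting `ε → 0` gives `0 ≤ ∫ (χ - G(θ,T)) : ψ` for all bounded `ψ`, and the test function
`ψ = -(χ - G(θ,T)) / (1 + |χ - G(θ,T)|)` then forces `χ = G(θ,T)` a.e.

The argument works in any real inner product space with a subspace `K` in place of `S³_d`; the
`3 × 3` matrices become one through the Frobenius inner product `frob`.
-/

open Function
open scoped RealInnerProductSpace Topology

namespace Real

theorem rpow_add_le_mul_rpow_add_rpow {a b p : ℝ} (ha : 0 ≤ a) (hb : 0 ≤ b) (hp : 1 ≤ p) :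
    (a + b) ^ p ≤ 2 ^ (p - 1) * (a ^ p + b ^ p) := by
  lift a to NNReal using ha
  lift b to NNReal using hb
  exact_mod_cast NNReal.rpow_add_le_mul_rpow_add_rpow a b hp

namespace HolderConjugate

variable {p q : ℝ}

theorem mul_le_rpow_add_rpow (hpq : p.HolderConjugate q) {a b : ℝ} (ha : 0 ≤ a) (hb : 0 ≤ b) :
    a * b ≤ a ^ p + b ^ q := by
  have := young_inequality_of_nonneg ha hb hpq
  have := div_le_self (rpow_nonneg ha p) hpq.lt.le
  have := div_le_self (rpow_nonneg hb q) hpq.symm.lt.le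
  linarith

theorem rpow_le_mul_rpow_of_le (hpq : p.HolderConjugate q) {a b C : ℝ} (ha : 0 ≤ a)
    (hb : 0 ≤ b) (hC : 0 ≤ C) (h : a ≤ C * b ^ (p - 1)) : a ^ q ≤ C ^ q * b ^ p :=
  calc a ^ q ≤ (C * b ^ (p - 1)) ^ q := rpow_le_rpow ha h hpq.symm.nonneg
    _ = C ^ q * b ^ p := by
      rw [mul_rpow hC (rpow_nonneg hb _), ← rpow_mul hb, hpq.sub_one_mul_conj]

end HolderConjugate

end Real

theorem Filter.Tendsto.le_of_eventually_le_of_limsup_le {α : Type*} {l : Filter α} [l.NeBot]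
    {u v : α → ℝ} {a b : ℝ} (hu : Tendsto u l (𝓝 a)) (huv : ∀ᶠ n in l, u n ≤ v n)
    (hv : IsBoundedUnder (· ≤ ·) l v) (hvb : limsup v l ≤ b) : a ≤ b := by
  rw [← hu.limsup_eq]
  exact (limsup_le_limsup huv hu.isCoboundedUnder_le hv).trans hvb

theorem inner_le_of_le_mul_rpow {E : Type*} [NormedAddCommGroup E] [InnerProductSpace ℝ E]
    {p q C : ℝ} (hpq : p.HolderConjugate q) (hC : 0 ≤ C) {a S : E}
    (h : ‖a‖ ≤ C * (1 + ‖S‖) ^ (p - 1)) :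
    ⟪a, S⟫ ≤ C ^ q * (2 ^ (p - 1) * (1 + ‖S‖ ^ p)) + ‖S‖ ^ p :=
  calc ⟪a, S⟫ ≤ ‖a‖ * ‖S‖ := real_inner_le_norm a S
    _ ≤ ‖a‖ ^ q + ‖S‖ ^ p := hpq.symm.mul_le_rpow_add_rpow (norm_nonneg a) (norm_nonneg S)
    _ ≤ C ^ q * (1 + ‖S‖) ^ p + ‖S‖ ^ p := by
      gcongr
      exact hpq.rpow_le_mul_rpow_of_le (norm_nonneg a) (by positivity) hC h
    _ ≤ C ^ q * (2 ^ (p - 1) * (1 + ‖S‖ ^ p)) + ‖S‖ ^ p := by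
      gcongr
      simpa using Real.rpow_add_le_mul_rpow_add_rpow zero_le_one (norm_nonneg S) hpq.lt.le

namespace MeasureTheory

variable {X : Type*} [MeasurableSpace X] {μ : Measure X} {p q : ℝ}

section NormedAddCommGroup

variable {F : Type*} [NormedAddCommGroup F] {f : X → F}

theorem _root_.Measurable.memLp_ofReal_of_integrable_norm_rpow [MeasurableSpace F]
    [OpensMeasurableSpace F] [SecondCountableTopology F] (hf : Measurable f) (hp : 0 < p)
    (h : Integrable (fun x => ‖f x‖ ^ p) μ) : MemLp f (ENNReal.ofReal p) μ :=
  (integrable_norm_rpow_iff hf.aestronglyMeasurable (by simpa using hp) ENNReal.ofReal_ne_top).1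
    (by rwa [ENNReal.toReal_ofReal hp.le])

theorem MemLp.integrable_norm_rpow_ofReal (hf : MemLp f (ENNReal.ofReal p) μ) (hp : 0 < p) :
    Integrable (fun x => ‖f x‖ ^ p) μ := by
  simpa [ENNReal.toReal_ofReal hp.le] using
    hf.integrable_norm_rpow (by simpa using hp) ENNReal.ofReal_ne_top

theorem MemLp.integrable_add_norm_rpow [IsFiniteMeasure μ] (hf : MemLp f (ENNReal.ofReal p) μ)
    (hp : 1 ≤ p) {c : ℝ} (hc : 0 ≤ c) : Integrable (fun x => (c + ‖f x‖) ^ p) μ := by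
  refine (((integrable_const (c ^ p)).add (hf.integrable_norm_rpow_ofReal (by linarith))).const_mul
    (2 ^ (p - 1))).mono' ((hf.1.norm.const_add c).aemeasurable.pow_const p).aestronglyMeasurable
    (ae_of_all _ fun x => ?_)
  rw [Real.norm_of_nonneg (by positivity)]
  exact Real.rpow_add_le_mul_rpow_add_rpow hc (norm_nonneg _) hp

end NormedAddCommGroup

variable {E : Type*} [NormedAddCommGroup E] [InnerProductSpace ℝ E]

section Pairing

variable {f g : X → E}

theorem MemLp.integrable_inner (hpq : p.HolderConjugate q) (hf : MemLp f (ENNReal.ofReal p) μ)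
    (hg : MemLp g (ENNReal.ofReal q) μ) : Integrable (fun x => ⟪f x, g x⟫) μ := by
  have := hpq.ennrealOfReal
  refine (hf.norm.integrable_mul hg.norm).mono' (hf.1.inner hg.1) (ae_of_all _ fun x => ?_)
  exact abs_real_inner_le_norm (f x) (g x)

theorem abs_integral_inner_le_Lp_mul_Lq (hpq : p.HolderConjugate q) (hf : MemLp f (ENNReal.ofReal p) μ)
    (hg : MemLp g (ENNReal.ofReal q) μ) :
    |∫ x, ⟪f x, g x⟫ ∂μ| ≤ (∫ x, ‖f x‖ ^ p ∂μ) ^ (1 / p) * (∫ x, ‖g x‖ ^ q ∂μ) ^ (1 / q) := by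
  have := hpq.ennrealOfReal
  calc |∫ x, ⟪f x, g x⟫ ∂μ| ≤ ∫ x, |⟪f x, g x⟫| ∂μ := abs_integral_le_integral_abs
    _ ≤ ∫ x, ‖f x‖ * ‖g x‖ ∂μ :=
      integral_mono_of_nonneg (ae_of_all _ fun _ => abs_nonneg _)
        (hf.norm.integrable_mul hg.norm) (ae_of_all _ fun x => abs_real_inner_le_norm _ _)
    _ ≤ _ := integral_mul_norm_le_Lp_mul_Lq hpq hf hg

theorem integral_inner_sub_sub (hpq : p.HolderConjugate q) {a b c d : X → E}
    (ha : MemLp a (ENNReal.ofReal p) μ) (hb : MemLp b (ENNReal.ofReal p) μ)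
    (hc : MemLp c (ENNReal.ofReal q) μ) (hd : MemLp d (ENNReal.ofReal q) μ) :
    ∫ x, ⟪a x - b x, c x - d x⟫ ∂μ = ∫ x, ⟪a x, c x⟫ ∂μ - ∫ x, ⟪a x, d x⟫ ∂μ
      - ∫ x, ⟪b x, c x⟫ ∂μ + ∫ x, ⟪b x, d x⟫ ∂μ := by
  have hac := ha.integrable_inner hpq hc
  have had := ha.integrable_inner hpq hd
  have hbc := hb.integrable_inner hpq hc
  have hbd := hb.integrable_inner hpq hd
  simp only [inner_sub_left, inner_sub_right]
  rw [integral_sub (by exact hac.sub hbc) (by exact had.sub hbd), integral_sub hac hbc,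
    integral_sub had hbd]
  ring

theorem tendsto_integral_inner_of_tendsto_of_weak (hpq : p.HolderConjugate q)
    {f : ℕ → X → E} {f₀ : X → E} {g : ℕ → X → E} {g₀ : X → E} {M : ℝ}
    (hf : ∀ n, MemLp (f n) (ENNReal.ofReal p) μ) (hfM : ∀ n, ∫ x, ‖f n x‖ ^ p ∂μ ≤ M)
    (hf_weak : Tendsto (fun n => ∫ x, ⟪f n x, g₀ x⟫ ∂μ) atTop (𝓝 (∫ x, ⟪f₀ x, g₀ x⟫ ∂μ)))
    (hg : ∀ n, MemLp (g n) (ENNReal.ofReal q) μ) (hg₀ : MemLp g₀ (ENNReal.ofReal q) μ)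
    (hg_lim : Tendsto (fun n => ∫ x, ‖g n x - g₀ x‖ ^ q ∂μ) atTop (𝓝 0)) :
    Tendsto (fun n => ∫ x, ⟪g n x, f n x⟫ ∂μ) atTop (𝓝 (∫ x, ⟪g₀ x, f₀ x⟫ ∂μ)) := by
  have hsplit : ∀ n, ∫ x, ⟪g n x, f n x⟫ ∂μ
      = ∫ x, ⟪f n x, g n x - g₀ x⟫ ∂μ + ∫ x, ⟪f n x, g₀ x⟫ ∂μ := fun n => by
    have hΔ : Integrable (fun x => ⟪f n x, g n x - g₀ x⟫) μ :=
      (hf n).integrable_inner hpq ((hg n).sub hg₀)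
    rw [← integral_add hΔ ((hf n).integrable_inner hpq hg₀)]
    simp only [← inner_add_right, sub_add_cancel, real_inner_comm]
  have hsmall : Tendsto (fun n => ∫ x, ⟪f n x, g n x - g₀ x⟫ ∂μ) atTop (𝓝 0) := by
    have hroot := (hg_lim.rpow_const (Or.inr hpq.symm.one_div_nonneg)).const_mul (M ^ (1 / p))
    rw [Real.zero_rpow hpq.symm.one_div_ne_zero, mul_zero] at hroot
    refine squeeze_zero_norm (fun n => ?_) hroot
    refine (abs_integral_inner_le_Lp_mul_Lq hpq (hf n) ((hg n).sub hg₀)).trans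
      (mul_le_mul_of_nonneg_right ?_ (Real.rpow_nonneg (integral_nonneg fun _ => by positivity) _))
    exact Real.rpow_le_rpow (integral_nonneg fun _ => by positivity) (hfM n) hpq.one_div_nonneg
  simpa only [hsplit, zero_add, real_inner_comm (f₀ _)] using hsmall.add hf_weak

end Pairing

end MeasureTheory

section Minty

variable {X : Type*} [MeasurableSpace X] {μ : Measure X}
  {E : Type*} [NormedAddCommGroup E] [InnerProductSpace ℝ E]
  [MeasurableSpace E] [BorelSpace E] [SecondCountableTopology E]
  {K : Submodule ℝ E} {p q C : ℝ} {G : ℝ → E → E}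

theorem ae_eq_zero_of_integral_inner_nonneg {D : X → E} (hD : Measurable D)
    (hD_int : Integrable D μ) (hDK : ∀ x, D x ∈ K)
    (h : ∀ ψ : X → E, Measurable ψ → (∀ x, ψ x ∈ K) → (∀ x, ‖ψ x‖ ≤ 1) →
      0 ≤ ∫ x, ⟪D x, ψ x⟫ ∂μ) :
    D =ᵐ[μ] 0 := by
  have hψ := h (fun x => -(1 + ‖D x‖)⁻¹ • D x) (((hD.norm.const_add 1).inv.neg).smul hD)
    (fun x => K.smul_mem _ (hDK x)) fun x => by
      rw [norm_smul, norm_neg, norm_inv, Real.norm_of_nonneg (by positivity),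
        inv_mul_le_iff₀ (by positivity)]
      linarith
  have hpair : ∀ x, ⟪D x, -(1 + ‖D x‖)⁻¹ • D x⟫ = -(‖D x‖ ^ 2 / (1 + ‖D x‖)) := fun x => by
    rw [real_inner_smul_right, real_inner_self_eq_norm_sq]
    ring
  simp only [hpair, integral_neg, Left.nonneg_neg_iff] at hψ
  have hint : Integrable (fun x => ‖D x‖ ^ 2 / (1 + ‖D x‖)) μ := by
    refine hD_int.norm.mono' ((hD.norm.pow_const 2).div (hD.norm.const_add 1)).aestronglyMeasurable
      (ae_of_all _ fun x => ?_)
    rw [Real.norm_of_nonneg (by positivity), div_le_iff₀ (by positivity)]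
    nlinarith [norm_nonneg (D x)]
  have hzero := (integral_eq_zero_iff_of_nonneg (fun x => by positivity) hint).1
    (le_antisymm hψ (integral_nonneg fun x => by positivity))
  filter_upwards [hzero] with x hx
  have hx' : ‖D x‖ ^ 2 / (1 + ‖D x‖) = 0 := hx
  rw [div_eq_zero_iff, or_iff_left (by positivity)] at hx'
  simpa using hx'

variable [IsFiniteMeasure μ]

theorem memLp_comp_of_growth (hpq : p.HolderConjugate q) (hC : 0 ≤ C)
    (hG_cont : Continuous (uncurry G))
    (hG_growth : ∀ ϑ S, S ∈ K → ‖G ϑ S‖ ≤ C * (1 + ‖S‖) ^ (p - 1))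
    {η : X → ℝ} {f : X → E} (hη : Measurable η) (hf : Measurable f) (hfK : ∀ x, f x ∈ K)
    (hf_p : MemLp f (ENNReal.ofReal p) μ) :
    MemLp (fun x => G (η x) (f x)) (ENNReal.ofReal q) μ := by
  have hGf : Measurable fun x => G (η x) (f x) := hG_cont.measurable2 hη hf
  refine hGf.memLp_ofReal_of_integrable_norm_rpow hpq.symm.pos
    (((hf_p.integrable_add_norm_rpow hpq.lt.le zero_le_one).const_mul (C ^ q)).mono'
      (hGf.norm.pow_const q).aestronglyMeasurable (ae_of_all _ fun x => ?_))
  rw [Real.norm_of_nonneg (by positivity)]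
  exact hpq.rpow_le_mul_rpow_of_le (norm_nonneg _) (by positivity) hC (hG_growth _ _ (hfK x))

theorem tendsto_integral_norm_comp_sub_rpow (hpq : p.HolderConjugate q) (hC : 0 ≤ C)
    (hG_cont : Continuous (uncurry G))
    (hG_growth : ∀ ϑ S, S ∈ K → ‖G ϑ S‖ ≤ C * (1 + ‖S‖) ^ (p - 1))
    {θn : ℕ → X → ℝ} {θ : X → ℝ} (hθn : ∀ n, Measurable (θn n)) (hθ : Measurable θ)
    (hθconv : ∀ᵐ x ∂μ, Tendsto (fun n => θn n x) atTop (𝓝 (θ x)))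
    {φ : X → E} (hφ : Measurable φ) (hφK : ∀ x, φ x ∈ K) (hφ_p : MemLp φ (ENNReal.ofReal p) μ) :
    Tendsto (fun n => ∫ x, ‖G (θn n x) (φ x) - G (θ x) (φ x)‖ ^ q ∂μ) atTop (𝓝 0) := by
  have hbound : ∀ n x,
      ‖G (θn n x) (φ x) - G (θ x) (φ x)‖ ^ q ≤ (2 * C) ^ q * (1 + ‖φ x‖) ^ p := by
    intro n x
    refine hpq.rpow_le_mul_rpow_of_le (norm_nonneg _) (by positivity) (by positivity) ?_
    linarith [norm_sub_le (G (θn n x) (φ x)) (G (θ x) (φ x)), hG_growth (θn n x) _ (hφK x),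
      hG_growth (θ x) _ (hφK x)]
  have hlim : ∀ᵐ x ∂μ,
      Tendsto (fun n => ‖G (θn n x) (φ x) - G (θ x) (φ x)‖ ^ q) atTop (𝓝 0) := by
    filter_upwards [hθconv] with x hx
    have hG : Tendsto (fun n => G (θn n x) (φ x)) atTop (𝓝 (G (θ x) (φ x))) :=
      (hG_cont.tendsto (θ x, φ x)).comp (hx.prodMk_nhds tendsto_const_nhds)
    simpa [Real.zero_rpow hpq.symm.ne_zero] using
      (hG.sub_const (G (θ x) (φ x))).norm.rpow_const (Or.inr hpq.symm.nonneg)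
  simpa using tendsto_integral_of_dominated_convergence _
    (fun n => (((hG_cont.measurable2 (hθn n) hφ).sub
      (hG_cont.measurable2 hθ hφ)).norm.pow_const q).aestronglyMeasurable)
    ((hφ_p.integrable_add_norm_rpow hpq.lt.le zero_le_one).const_mul ((2 * C) ^ q))
    (fun n => ae_of_all _ fun x => by rw [Real.norm_of_nonneg (by positivity)]; exact hbound n x)
    hlim

theorem isBoundedUnder_integral_inner_comp_of_growth (hpq : p.HolderConjugate q) (hC : 0 ≤ C)
    (hG_cont : Continuous (uncurry G))
    (hG_growth : ∀ ϑ S, S ∈ K → ‖G ϑ S‖ ≤ C * (1 + ‖S‖) ^ (p - 1))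
    {θn : ℕ → X → ℝ} {Tn : ℕ → X → E} {M : ℝ} (hθn : ∀ n, Measurable (θn n))
    (hTn : ∀ n, Measurable (Tn n)) (hTnK : ∀ n x, Tn n x ∈ K)
    (hTn_p : ∀ n, MemLp (Tn n) (ENNReal.ofReal p) μ) (hM : ∀ n, ∫ x, ‖Tn n x‖ ^ p ∂μ ≤ M) :
    IsBoundedUnder (· ≤ ·) atTop (fun n => ∫ x, ⟪G (θn n x) (Tn n x), Tn n x⟫ ∂μ) := by
  refine isBoundedUnder_of ⟨C ^ q * (2 ^ (p - 1) * (μ.real Set.univ + M)) + M, fun n => ?_⟩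
  have hTn_int := (hTn_p n).integrable_norm_rpow_ofReal hpq.pos
  have hbound_int : Integrable (fun x => C ^ q * (2 ^ (p - 1) * (1 + ‖Tn n x‖ ^ p))) μ :=
    (((integrable_const 1).add hTn_int).const_mul _).const_mul _
  calc ∫ x, ⟪G (θn n x) (Tn n x), Tn n x⟫ ∂μ
      ≤ ∫ x, C ^ q * (2 ^ (p - 1) * (1 + ‖Tn n x‖ ^ p)) + ‖Tn n x‖ ^ p ∂μ :=
        integral_mono ((memLp_comp_of_growth hpq hC hG_cont hG_growth (hθn n) (hTn n) (hTnK n)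
          (hTn_p n)).integrable_inner hpq.symm (hTn_p n)) (hbound_int.add hTn_int)
          fun x => inner_le_of_le_mul_rpow hpq hC (hG_growth _ _ (hTnK n x))
    _ = C ^ q * (2 ^ (p - 1) * (μ.real Set.univ + ∫ x, ‖Tn n x‖ ^ p ∂μ))
          + ∫ x, ‖Tn n x‖ ^ p ∂μ := by
        rw [integral_add hbound_int hTn_int, integral_const_mul, integral_const_mul,
          integral_add (integrable_const 1) hTn_int]
        simp
    _ ≤ _ := by gcongr <;> exact hM n

theorem integral_inner_sub_nonneg_of_monotone (hpq : p.HolderConjugate q) (hC : 0 ≤ C)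
    (hG_cont : Continuous (uncurry G))
    (hG_growth : ∀ ϑ S, S ∈ K → ‖G ϑ S‖ ≤ C * (1 + ‖S‖) ^ (p - 1))
    (hG_mono : ∀ ϑ S₁ S₂, S₁ ∈ K → S₂ ∈ K → 0 ≤ ⟪G ϑ S₁ - G ϑ S₂, S₁ - S₂⟫)
    (hG_maps : ∀ ϑ S, S ∈ K → G ϑ S ∈ K)
    {θn : ℕ → X → ℝ} {θ : X → ℝ} (hθn : ∀ n, Measurable (θn n)) (hθ : Measurable θ)
    (hθconv : ∀ᵐ x ∂μ, Tendsto (fun n => θn n x) atTop (𝓝 (θ x)))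
    {Tn : ℕ → X → E} {T : X → E} {M : ℝ} (hTn : ∀ n, Measurable (Tn n))
    (hTnK : ∀ n x, Tn n x ∈ K) (hTn_p : ∀ n, MemLp (Tn n) (ENNReal.ofReal p) μ)
    (hM : ∀ n, ∫ x, ‖Tn n x‖ ^ p ∂μ ≤ M) (hT_p : MemLp T (ENNReal.ofReal p) μ)
    {χ : X → E} (hχ_q : MemLp χ (ENNReal.ofReal q) μ)
    (hweakG : ∀ φ : X → E, Measurable φ → (∀ x, φ x ∈ K) → Integrable (fun x => ‖φ x‖ ^ p) μ →
      Tendsto (fun n => ∫ x, ⟪G (θn n x) (Tn n x), φ x⟫ ∂μ) atTop (𝓝 (∫ x, ⟪χ x, φ x⟫ ∂μ)))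
    (hweakT : ∀ φ : X → E, Measurable φ → (∀ x, φ x ∈ K) → Integrable (fun x => ‖φ x‖ ^ q) μ →
      Tendsto (fun n => ∫ x, ⟪Tn n x, φ x⟫ ∂μ) atTop (𝓝 (∫ x, ⟪T x, φ x⟫ ∂μ)))
    (hlimsup : limsup (fun n => ∫ x, ⟪G (θn n x) (Tn n x), Tn n x⟫ ∂μ) atTop
      ≤ ∫ x, ⟪χ x, T x⟫ ∂μ)
    (φ : X → E) (hφ : Measurable φ) (hφK : ∀ x, φ x ∈ K) (hφ_p : MemLp φ (ENNReal.ofReal p) μ) :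
    0 ≤ ∫ x, ⟪χ x - G (θ x) (φ x), T x - φ x⟫ ∂μ := by
  have hGn n := memLp_comp_of_growth (μ := μ) hpq hC hG_cont hG_growth (hθn n) (hTn n) (hTnK n)
    (hTn_p n)
  have hGφn n := memLp_comp_of_growth (μ := μ) hpq hC hG_cont hG_growth (hθn n) hφ hφK hφ_p
  have hGφ := memLp_comp_of_growth (μ := μ) hpq hC hG_cont hG_growth hθ hφ hφK hφ_p
  have hstrong :=
    tendsto_integral_norm_comp_sub_rpow hpq hC hG_cont hG_growth hθn hθ hθconv hφ hφK hφ_p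
  have hlimG := hweakG φ hφ hφK (hφ_p.integrable_norm_rpow_ofReal hpq.pos)
  have hlimT := tendsto_integral_inner_of_tendsto_of_weak hpq hTn_p hM
    (hweakT _ (hG_cont.measurable2 hθ hφ) (fun x => hG_maps _ _ (hφK x))
      (hGφ.integrable_norm_rpow_ofReal hpq.symm.pos)) hGφn hGφ hstrong
  have hlimφ := tendsto_integral_inner_of_tendsto_of_weak hpq (fun _ => hφ_p) (fun _ => le_rfl)
    tendsto_const_nhds hGφn hGφ hstrong
  have hmono : ∀ n, ∫ x, ⟪G (θn n x) (Tn n x), φ x⟫ ∂μ + ∫ x, ⟪G (θn n x) (φ x), Tn n x⟫ ∂μ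
      - ∫ x, ⟪G (θn n x) (φ x), φ x⟫ ∂μ ≤ ∫ x, ⟪G (θn n x) (Tn n x), Tn n x⟫ ∂μ := fun n => by
    have h : 0 ≤ ∫ x, ⟪G (θn n x) (Tn n x) - G (θn n x) (φ x), Tn n x - φ x⟫ ∂μ :=
      integral_nonneg fun x => hG_mono (θn n x) _ _ (hTnK n x) (hφK x)
    rw [integral_inner_sub_sub hpq.symm (hGn n) (hGφn n) (hTn_p n) hφ_p] at h
    linarith
  have hle := ((hlimG.add hlimT).sub hlimφ).le_of_eventually_le_of_limsup_le (.of_forall hmono)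
    (isBoundedUnder_integral_inner_comp_of_growth hpq hC hG_cont hG_growth hθn hTn hTnK hTn_p hM)
    hlimsup
  rw [integral_inner_sub_sub hpq.symm hχ_q hGφ hT_p hφ_p]
  linarith

theorem tendsto_integral_inner_comp_sub_smul (hp : 1 ≤ p) (hC : 0 ≤ C)
    (hG_cont : Continuous (uncurry G))
    (hG_growth : ∀ ϑ S, S ∈ K → ‖G ϑ S‖ ≤ C * (1 + ‖S‖) ^ (p - 1))
    {θ : X → ℝ} (hθ : Measurable θ) {T : X → E} (hT : Measurable T) (hTK : ∀ x, T x ∈ K)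
    (hT_p : MemLp T (ENNReal.ofReal p) μ) {χ : X → E} (hχ_int : Integrable χ μ)
    {ψ : X → E} (hψ : Measurable ψ) (hψK : ∀ x, ψ x ∈ K) (hψ_le : ∀ x, ‖ψ x‖ ≤ 1)
    {ε : ℕ → ℝ} (hε_mem : ∀ k, ε k ∈ Set.Icc 0 1) (hε : Tendsto ε atTop (𝓝 0)) :
    Tendsto (fun k => ∫ x, ⟪χ x - G (θ x) (T x - ε k • ψ x), ψ x⟫ ∂μ) atTop
      (𝓝 (∫ x, ⟪χ x - G (θ x) (T x), ψ x⟫ ∂μ)) := by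
  refine tendsto_integral_of_dominated_convergence (fun x => ‖χ x‖ + C * (2 + ‖T x‖) ^ p)
    (fun k => (hχ_int.1.sub (hG_cont.measurable2 hθ
      (hT.sub (hψ.const_smul (ε k)))).aestronglyMeasurable).inner hψ.aestronglyMeasurable)
    (hχ_int.norm.add ((hT_p.integrable_add_norm_rpow hp zero_le_two).const_mul C))
    (fun k => ae_of_all _ fun x => ?_) (ae_of_all _ fun x => ?_)
  · have hφ : 1 + ‖T x - ε k • ψ x‖ ≤ 2 + ‖T x‖ := by
      have := norm_sub_le (T x) (ε k • ψ x)
      rw [norm_smul, Real.norm_of_nonneg (hε_mem k).1] at this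
      nlinarith [(hε_mem k).2, hψ_le x, norm_nonneg (ψ x)]
    have hG : ‖G (θ x) (T x - ε k • ψ x)‖ ≤ C * (2 + ‖T x‖) ^ p :=
      calc _ ≤ C * (1 + ‖T x - ε k • ψ x‖) ^ (p - 1) :=
            hG_growth _ _ (K.sub_mem (hTK x) (K.smul_mem _ (hψK x)))
        _ ≤ C * (2 + ‖T x‖) ^ (p - 1) := by gcongr
        _ ≤ C * (2 + ‖T x‖) ^ p := by
            gcongr
            · linarith [norm_nonneg (T x)]
            · linarith
    calc ‖⟪χ x - G (θ x) (T x - ε k • ψ x), ψ x⟫‖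
        ≤ ‖χ x - G (θ x) (T x - ε k • ψ x)‖ * ‖ψ x‖ := norm_inner_le_norm _ _
      _ ≤ ‖χ x - G (θ x) (T x - ε k • ψ x)‖ := mul_le_of_le_one_right (norm_nonneg _) (hψ_le x)
      _ ≤ ‖χ x‖ + C * (2 + ‖T x‖) ^ p := (norm_sub_le _ _).trans (by linarith)
  · have hφ : Tendsto (fun k => T x - ε k • ψ x) atTop (𝓝 (T x)) := by
      simpa using tendsto_const_nhds.sub (hε.smul_const (ψ x))
    exact (tendsto_const_nhds.sub ((hG_cont.tendsto (θ x, T x)).comp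
      (tendsto_const_nhds.prodMk_nhds hφ))).inner tendsto_const_nhds

theorem integral_inner_nonneg_of_minty (hp : 1 ≤ p) (hC : 0 ≤ C)
    (hG_cont : Continuous (uncurry G))
    (hG_growth : ∀ ϑ S, S ∈ K → ‖G ϑ S‖ ≤ C * (1 + ‖S‖) ^ (p - 1))
    {θ : X → ℝ} (hθ : Measurable θ) {T : X → E} (hT : Measurable T) (hTK : ∀ x, T x ∈ K)
    (hT_p : MemLp T (ENNReal.ofReal p) μ) {χ : X → E} (hχ_int : Integrable χ μ)
    (hminty : ∀ φ : X → E, Measurable φ → (∀ x, φ x ∈ K) → MemLp φ (ENNReal.ofReal p) μ →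
      0 ≤ ∫ x, ⟪χ x - G (θ x) (φ x), T x - φ x⟫ ∂μ)
    {ψ : X → E} (hψ : Measurable ψ) (hψK : ∀ x, ψ x ∈ K) (hψ_le : ∀ x, ‖ψ x‖ ≤ 1) :
    0 ≤ ∫ x, ⟪χ x - G (θ x) (T x), ψ x⟫ ∂μ := by
  have hε_mem (k : ℕ) : 1 / ((k : ℝ) + 1) ∈ Set.Icc (0 : ℝ) 1 :=
    ⟨by positivity, div_le_one_of_le₀ (by linarith [k.cast_nonneg (α := ℝ)]) (by positivity)⟩
  refine ge_of_tendsto' (tendsto_integral_inner_comp_sub_smul hp hC hG_cont hG_growth hθ hT hTK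
    hT_p hχ_int hψ hψK hψ_le hε_mem tendsto_one_div_add_atTop_nhds_zero_nat) fun k => ?_
  have hψ_p : MemLp ψ (ENNReal.ofReal p) μ := .of_bound hψ.aestronglyMeasurable 1 (ae_of_all _ hψ_le)
  have h := hminty (fun x => T x - (1 / ((k : ℝ) + 1)) • ψ x) (hT.sub (hψ.const_smul _))
    (fun x => K.sub_mem (hTK x) (K.smul_mem _ (hψK x))) (hT_p.sub (hψ_p.const_smul _))
  simp only [sub_sub_cancel, real_inner_smul_right, integral_const_mul] at h
  exact nonneg_of_mul_nonneg_right h (by positivity)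

theorem ae_eq_of_minty (hpq : p.HolderConjugate q) (hC : 0 ≤ C)
    (hG_cont : Continuous (uncurry G))
    (hG_growth : ∀ ϑ S, S ∈ K → ‖G ϑ S‖ ≤ C * (1 + ‖S‖) ^ (p - 1))
    (hG_maps : ∀ ϑ S, S ∈ K → G ϑ S ∈ K)
    {θ : X → ℝ} (hθ : Measurable θ) {T : X → E} (hT : Measurable T) (hTK : ∀ x, T x ∈ K)
    (hT_p : MemLp T (ENNReal.ofReal p) μ) {χ : X → E} (hχ : Measurable χ) (hχK : ∀ x, χ x ∈ K)
    (hχ_q : MemLp χ (ENNReal.ofReal q) μ)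
    (hminty : ∀ φ : X → E, Measurable φ → (∀ x, φ x ∈ K) → MemLp φ (ENNReal.ofReal p) μ →
      0 ≤ ∫ x, ⟪χ x - G (θ x) (φ x), T x - φ x⟫ ∂μ) :
    ∀ᵐ x ∂μ, χ x = G (θ x) (T x) := by
  have hq : 1 ≤ ENNReal.ofReal q := ENNReal.one_le_ofReal.2 hpq.symm.lt.le
  have hχ_int := hχ_q.integrable hq
  have hGT := memLp_comp_of_growth (μ := μ) hpq hC hG_cont hG_growth hθ hT hTK hT_p
  have hD := ae_eq_zero_of_integral_inner_nonneg (D := fun x => χ x - G (θ x) (T x))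
    (hχ.sub (hG_cont.measurable2 hθ hT)) (hχ_int.sub (hGT.integrable hq))
    (fun x => K.sub_mem (hχK x) (hG_maps _ _ (hTK x))) fun _ hψ hψK hψ_le =>
      integral_inner_nonneg_of_minty hpq.lt.le hC hG_cont hG_growth hθ hT hTK hT_p hχ_int hminty
        hψ hψK hψ_le
  filter_upwards [hD] with x hx using sub_eq_zero.1 hx

end Minty

section Frobenius

attribute [local instance] Matrix.frobeniusNormedAddCommGroup Matrix.frobeniusNormedSpace

theorem frobenius_norm_sq_eq_frob (A : Matrix (Fin 3) (Fin 3) ℝ) : ‖A‖ ^ 2 = frob A A := by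
  rw [Matrix.frobenius_norm_def, ← Real.sqrt_eq_rpow, Real.sq_sqrt (by positivity)]
  simp [frob, Real.norm_eq_abs, sq]

/-- The norm is `Matrix.frobeniusNormedAddCommGroup`, whose topology is the product topology, so
continuity and measurability of matrix-valued maps keep their meaning. -/
noncomputable abbrev frobInnerProductSpace : InnerProductSpace ℝ (Matrix (Fin 3) (Fin 3) ℝ) where
  inner := frob
  norm_sq_eq_re_inner := frobenius_norm_sq_eq_frob
  conj_inner_symm A B := by simp [frob, mul_comm]
  add_left A B C := by simp [frob, add_mul, Finset.sum_add_distrib]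
  smul_left A B c := by simp [frob, Finset.mul_sum, mul_assoc]

theorem frobNorm_eq_norm (A : Matrix (Fin 3) (Fin 3) ℝ) : frobNorm A = ‖A‖ := by
  rw [frobNorm, ← frobenius_norm_sq_eq_frob, Real.sqrt_sq (norm_nonneg A)]

-- Stated for the metric topology, which is only definitionally equal to the product topology
-- that instance search would otherwise pick.
instance frobeniusBorelSpace :
    @BorelSpace (Matrix (Fin 3) (Fin 3) ℝ) PseudoMetricSpace.toUniformSpace.toTopologicalSpace _ :=
  ⟨(Pi.borelSpace (X := fun _ : Fin 3 => Fin 3 → ℝ)).measurable_eq⟩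

instance frobeniusSecondCountableTopology :
    @SecondCountableTopology (Matrix (Fin 3) (Fin 3) ℝ)
      PseudoMetricSpace.toUniformSpace.toTopologicalSpace :=
  inferInstanceAs (SecondCountableTopology (Fin 3 → Fin 3 → ℝ))

end Frobenius

def S3d : Submodule ℝ (Matrix (Fin 3) (Fin 3) ℝ) where
  carrier := {A | IsS3d A}
  add_mem' hA hB := ⟨hA.1.add hB.1, by rw [Matrix.trace_add, hA.2, hB.2, add_zero]⟩
  zero_mem' := ⟨Matrix.isSymm_zero, Matrix.trace_zero _ _⟩
  smul_mem' c _ hA := ⟨hA.1.smul c, by rw [Matrix.trace_smul, hA.2, smul_zero]⟩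

/-- **Minty–Browder identification of the weak limit (equation (2.57)).**
If `G` is continuous, has `(p-1)`-growth and is monotone in its second
variable, `θ_n → θ` a.e., `T_n` is bounded in `L^p`, `G(θ_n,T_n) ⇀ χ` in
`L^{p'}`, `T_n ⇀ T` in `L^p` (both expressed via duality pairings), and
`limsup_n ∫ G(θ_n,T_n) : T_n dμ ≤ ∫ χ : T dμ`, then `χ = G(θ,T)` a.e. -/
theorem minty_browder_identification
    {X : Type*} [MeasurableSpace X] (μ : Measure X) [IsFiniteMeasure μ]
    (p C : ℝ) (hp : 2 ≤ p) (hC : 0 < C)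
    (G : ℝ → Matrix (Fin 3) (Fin 3) ℝ → Matrix (Fin 3) (Fin 3) ℝ)
    (hG_cont : Continuous (fun q : ℝ × Matrix (Fin 3) (Fin 3) ℝ => G q.1 q.2))
    (hG_maps : ∀ (ϑ : ℝ) (S : Matrix (Fin 3) (Fin 3) ℝ), IsS3d S → IsS3d (G ϑ S))
    (hG_growth : ∀ (ϑ : ℝ) (S : Matrix (Fin 3) (Fin 3) ℝ), IsS3d S →
      frobNorm (G ϑ S) ≤ C * (1 + frobNorm S) ^ (p - 1))
    (hG_mono : ∀ (ϑ : ℝ) (S₁ S₂ : Matrix (Fin 3) (Fin 3) ℝ), IsS3d S₁ → IsS3d S₂ →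
      0 ≤ frob (G ϑ S₁ - G ϑ S₂) (S₁ - S₂))
    (θn : ℕ → X → ℝ) (θ : X → ℝ)
    (hθn : ∀ n, Measurable (θn n)) (hθ : Measurable θ)
    (hθconv : ∀ᵐ x ∂μ, Tendsto (fun n => θn n x) atTop (nhds (θ x)))
    (Tn : ℕ → X → Matrix (Fin 3) (Fin 3) ℝ) (T : X → Matrix (Fin 3) (Fin 3) ℝ)
    (hTn : ∀ n, Measurable (Tn n)) (hT : Measurable T)
    (hTnd : ∀ n x, IsS3d (Tn n x)) (hTd : ∀ x, IsS3d (T x))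
    (hTn_int : ∀ n, Integrable (fun x => frobNorm (Tn n x) ^ p) μ)
    (hTn_bdd : ∃ M : ℝ, ∀ n, ∫ x, frobNorm (Tn n x) ^ p ∂μ ≤ M)
    (hT_int : Integrable (fun x => frobNorm (T x) ^ p) μ)
    (χ : X → Matrix (Fin 3) (Fin 3) ℝ) (hχ : Measurable χ)
    (hχd : ∀ x, IsS3d (χ x))
    (hχ_int : Integrable (fun x => frobNorm (χ x) ^ (p / (p - 1))) μ)
    -- (i) weak `L^{p'}` convergence of `G(θ_n, T_n)` to `χ` :
    (hweakG : ∀ φ : X → Matrix (Fin 3) (Fin 3) ℝ, Measurable φ →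
      (∀ x, IsS3d (φ x)) → Integrable (fun x => frobNorm (φ x) ^ p) μ →
      Tendsto (fun n => ∫ x, frob (G (θn n x) (Tn n x)) (φ x) ∂μ) atTop
        (nhds (∫ x, frob (χ x) (φ x) ∂μ)))
    -- (ii) weak `L^p` convergence of `T_n` to `T` :
    (hweakT : ∀ φ : X → Matrix (Fin 3) (Fin 3) ℝ, Measurable φ →
      (∀ x, IsS3d (φ x)) → Integrable (fun x => frobNorm (φ x) ^ (p / (p - 1))) μ →
      Tendsto (fun n => ∫ x, frob (Tn n x) (φ x) ∂μ) atTop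
        (nhds (∫ x, frob (T x) (φ x) ∂μ)))
    -- (iii) the limsup energy inequality :
    (hlimsup : limsup (fun n => ∫ x, frob (G (θn n x) (Tn n x)) (Tn n x) ∂μ) atTop
        ≤ ∫ x, frob (χ x) (T x) ∂μ) :
    ∀ᵐ x ∂μ, χ x = G (θ x) (T x) := by
  let _ : NormedAddCommGroup (Matrix (Fin 3) (Fin 3) ℝ) := Matrix.frobeniusNormedAddCommGroup
  let _ : InnerProductSpace ℝ (Matrix (Fin 3) (Fin 3) ℝ) := frobInnerProductSpace
  -- `frob` is definitionally the inner product, so only `frobNorm` needs rewriting.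
  simp only [frobNorm_eq_norm] at *
  have hpq : p.HolderConjugate (p / (p - 1)) := .conjExponent (by linarith)
  obtain ⟨M, hM⟩ := hTn_bdd
  have hTn_p : ∀ n, MemLp (Tn n) (ENNReal.ofReal p) μ := fun n =>
    (hTn n).memLp_ofReal_of_integrable_norm_rpow hpq.pos (hTn_int n)
  have hT_p : MemLp T (ENNReal.ofReal p) μ :=
    hT.memLp_ofReal_of_integrable_norm_rpow hpq.pos hT_int
  have hχ_q : MemLp χ (ENNReal.ofReal (p / (p - 1))) μ :=
    hχ.memLp_ofReal_of_integrable_norm_rpow hpq.symm.pos hχ_int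
  exact ae_eq_of_minty (K := S3d) hpq hC.le hG_cont hG_growth hG_maps hθ hT hTd hT_p hχ hχd hχ_q
    (integral_inner_sub_nonneg_of_monotone hpq hC.le hG_cont hG_growth hG_mono hG_maps hθn hθ
      hθconv hTn hTnd hTn_p hM hT_p hχ_q hweakG hweakT hlimsup)
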